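/- Let Λ be a dominant weight and let W_P be the subgroup of W generated by the simple reflections s_γ with ⟨Λ, γ^∨⟩ = 0. If w ∈ W is Λ-minuscule or Λ-cominuscule, then w is a minimal length coset representative of w·W_P, i.e. w ∈ W^P; equivalently, ℓ(w s_γ) = ℓ(w) + 1 for every simple root γ with ⟨Λ, γ^∨⟩ = 0. -/

import Mathlib

namespace KM

/-! ## Jeu de taquin on posets (parametrized by an order relation `r`) -/

namespace JDT

variable {P : Type}

/-- `S` is a lower set (order ideal) for the relation `r`. -/
def IsIdeal (r : P → P → Prop) (S : Set P) : Prop :=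
  ∀ ⦃x y : P⦄, r x y → y ∈ S → x ∈ S

/-- `y` covers `x` for the order relation `r`. -/
def Cov (r : P → P → Prop) (x y : P) : Prop :=
  r x y ∧ x ≠ y ∧ ∀ z : P, r x z → r z y → z = x ∨ z = y

/-- A standard tableau for the order relation `r`: a finite set of boxes, labelled
strictly increasingly (w.r.t. `r`) and bijectively by `{1, …, n}`. -/
structure Tab (r : P → P → Prop) where
  dom : Set P
  finite : dom.Finite
  lab : P → ℕ
  mono : ∀ ⦃x y : P⦄, x ∈ dom → y ∈ dom → r x y → x ≠ y → lab x < lab y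
  bij : Set.BijOn lab dom (Set.Icc 1 dom.ncard)

/-- A configuration occurring during a jeu de taquin slide: a set of labelled boxes,
the labelling, and the position of the vacant box. -/
structure Cfg (P : Type) where
  dom : Set P
  lab : P → ℕ
  hole : P

/-- One elementary move inside a jeu de taquin slide: among the labelled boxes covering
the vacant box, the one with the smallest label moves its label into the vacant box,
becoming itself vacant. -/
def InnerStep (r : P → P → Prop) (s t : Cfg P) : Prop :=
  t.hole ∈ s.dom ∧ Cov r s.hole t.hole ∧
  (∀ z ∈ s.dom, Cov r s.hole z → s.lab t.hole ≤ s.lab z) ∧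
  t.dom = insert s.hole (s.dom \ {t.hole}) ∧
  t.lab s.hole = s.lab t.hole ∧ (∀ z : P, z ≠ s.hole → t.lab z = s.lab z)

/-- No labelled box covers the vacant box: the slide stops. -/
def Terminal (r : P → P → Prop) (s : Cfg P) : Prop :=
  ∀ z ∈ s.dom, ¬ Cov r s.hole z

/-- `x` is a valid vacant box to slide into: it lies strictly below some labelled box,
and is maximal among the unlabelled boxes lying strictly below some labelled box. -/
def IsSlideBox (r : P → P → Prop) (D : Set P) (x : P) : Prop :=
  x ∉ D ∧ (∃ d ∈ D, r x d ∧ x ≠ d) ∧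
  ∀ y : P, y ∉ D → (∃ d ∈ D, r y d ∧ y ≠ d) → r x y → x = y

/-- The jeu de taquin slide `j_x` : relation between the labelled configurations
before and after one full slide. -/
def SlideRel (r : P → P → Prop) (A B : Set P × (P → ℕ)) : Prop :=
  ∃ x : P, IsSlideBox r A.1 x ∧
    ∃ e : Cfg P, Relation.ReflTransGen (InnerStep r) ⟨A.1, A.2, x⟩ e ∧
      Terminal r e ∧ B.1 = e.dom ∧ B.2 = e.lab

/-- `R` is a rectification of `T`: it is obtained from `T` by iterating jeu de taquin
slides, and its shape is an order ideal. -/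
def RectifiesTo (r : P → P → Prop) (T R : Tab r) : Prop :=
  Relation.ReflTransGen (SlideRel r) (T.dom, T.lab) (R.dom, R.lab) ∧ IsIdeal r R.dom

/-- The poset has the jeu de taquin property: the rectification of any standard tableau
is independent of all choices made while performing the slides. -/
def HasJdt (r : P → P → Prop) : Prop :=
  ∀ T R R' : Tab r, RectifiesTo r T R → RectifiesTo r T R' → R.dom = R'.dom ∧ R.lab = R'.lab

open scoped Classical in
/-- The jeu de taquin number `t_{λ,μ}^ν`, relative to a choice `U` of a standard tableau
of each straight shape: the number of standard tableaux of skew shape `ν/λ` whose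
rectification is `U μ`; it is `0` if `λ ⊄ ν`. -/
noncomputable def tP (r : P → P → Prop) (U : Set P → Tab r) (lam mu nu : Set P) : ℕ :=
  if lam ⊆ nu then
    Set.ncard {T : Tab r | T.dom = nu \ lam ∧ RectifiesTo r T (U mu)}
  else 0

end JDT

/-! ## Symmetrizable generalized Cartan matrices and their Weyl groups -/

/-- A symmetrizable generalized Cartan matrix `a i j = ⟨α_j, α_i^∨⟩`, together with a
symmetrizer `d` (so that `(α_i, α_j) = d i * a i j` is a symmetric bilinear form with
`(α_i, α_i) = 2 * d i`). -/
structure SGCM (I : Type) where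
  a : I → I → ℤ
  d : I → ℝ
  a_diag : ∀ i, a i i = 2
  a_offdiag : ∀ i j, i ≠ j → a i j ≤ 0
  a_zero_iff : ∀ i j, a i j = 0 → a j i = 0
  d_pos : ∀ i, 0 < d i
  symm : ∀ i j, d i * (a i j : ℝ) = d j * (a j i : ℝ)

variable {I : Type}

/-- The squared length `(α_i, α_i)` of the `i`-th simple root. -/
def SGCM.normSq (G : SGCM I) (i : I) : ℝ := 2 * G.d i

/-- The dual (transposed) generalized Cartan matrix, corresponding to exchanging
roots and coroots. -/
noncomputable def SGCM.dual (G : SGCM I) : SGCM I where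
  a i j := G.a j i
  d i := (G.d i)⁻¹
  a_diag i := G.a_diag i
  a_offdiag i j h := G.a_offdiag j i (Ne.symm h)
  a_zero_iff i j h := G.a_zero_iff j i h
  d_pos i := inv_pos.mpr (G.d_pos i)
  symm i j := by
    have h := G.symm j i
    have hi : G.d i ≠ 0 := ne_of_gt (G.d_pos i)
    have hj : G.d j ≠ 0 := ne_of_gt (G.d_pos j)
    rw [inv_mul_eq_div, inv_mul_eq_div, div_eq_div_iff hi hj]
    linear_combination h

/-- The simple reflection `s_i` acting on weight coordinates: a weight `λ` is recorded
by its pairings `λ j = ⟨λ, α_j^∨⟩` with the simple coroots, and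
`⟨s_i λ, α_j^∨⟩ = ⟨λ, α_j^∨⟩ - ⟨λ, α_i^∨⟩ ⟨α_i, α_j^∨⟩`. -/
def SGCM.srefl (G : SGCM I) (i : I) : Equiv.Perm (I → ℝ) :=
  Function.Involutive.toPerm (fun lam j => lam j - lam i * (G.a j i : ℝ)) (by
    intro lam
    funext j
    have h2 : ((G.a i i : ℤ) : ℝ) = 2 := by rw [G.a_diag i]; norm_num
    dsimp only
    rw [h2]
    ring)

/-- The product `s_{l 1} ⋯ s_{l n}` of the simple reflections along a word. -/
def SGCM.wordProd (G : SGCM I) (l : List I) : Equiv.Perm (I → ℝ) :=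
  (l.map G.srefl).prod

/-- The length of an element of the Weyl group: the minimal length of a word of simple
reflections expressing it. -/
noncomputable def SGCM.length (G : SGCM I) (w : Equiv.Perm (I → ℝ)) : ℕ :=
  sInf {n | ∃ l : List I, l.length = n ∧ G.wordProd l = w}

/-- A word is reduced if no shorter word has the same product. -/
def SGCM.IsReduced (G : SGCM I) (l : List I) : Prop :=
  G.length (G.wordProd l) = l.length

/-- `w` belongs to the Weyl group (is a product of simple reflections). -/
def SGCM.InW (G : SGCM I) (w : Equiv.Perm (I → ℝ)) : Prop :=
  ∃ l : List I, G.wordProd l = w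

/-- The (strong) Bruhat order on the Weyl group, via the subword property. -/
def SGCM.bruhatLE (G : SGCM I) (u w : Equiv.Perm (I → ℝ)) : Prop :=
  ∃ l : List I, G.IsReduced l ∧ G.wordProd l = w ∧
    ∃ l' : List I, l'.Sublist l ∧ G.wordProd l' = u

/-- Peterson's condition: the word `[β_1, …, β_l]` satisfies
`s_{β_k} s_{β_{k+1}} ⋯ s_{β_l} (Λ) = s_{β_{k+1}} ⋯ s_{β_l} (Λ) - β_k`, i.e.
`⟨s_{β_{k+1}} ⋯ s_{β_l} (Λ), β_k^∨⟩ = 1`, for every `k`. -/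
def SGCM.MinusculeWord (G : SGCM I) (Λ : I → ℝ) : List I → Prop
  | [] => True
  | j :: l => G.MinusculeWord Λ l ∧ G.wordProd l Λ j = 1

/-- `w` is `Λ`-minuscule. -/
def SGCM.IsMinuscule (G : SGCM I) (Λ : I → ℝ) (w : Equiv.Perm (I → ℝ)) : Prop :=
  ∃ l : List I, G.IsReduced l ∧ G.wordProd l = w ∧ G.MinusculeWord Λ l

/-- `w` is `Λ`-cominuscule: it is `Λ^∨`-minuscule for the dual root system (where the
coweight `Λ^∨ = Σ Λ_i ϖ_i^∨` has the same coordinate function as `Λ`). -/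
def SGCM.IsCominuscule (G : SGCM I) (Λ : I → ℝ) (w : Equiv.Perm (I → ℝ)) : Prop :=
  ∃ l : List I, G.IsReduced l ∧ G.wordProd l = w ∧ G.dual.MinusculeWord Λ l

/-- `w` is `Λ`-minuscule or `Λ`-cominuscule. -/
def SGCM.IsCoMin (G : SGCM I) (Λ : I → ℝ) (w : Equiv.Perm (I → ℝ)) : Prop :=
  G.IsMinuscule Λ w ∨ G.IsCominuscule Λ w

/-- The simple reflection `s_i` acting on the root lattice `⊕ ℤ α_j` (an element is
recorded by its coordinates on the simple roots):
`s_i (x) = x - ⟨x, α_i^∨⟩ α_i` with `⟨Σ c_j α_j, α_i^∨⟩ = Σ c_j * a i j`. -/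
noncomputable def SGCM.qrefl (G : SGCM I) (i : I) : Equiv.Perm (I →₀ ℤ) :=
  Function.Involutive.toPerm
    (fun x => x - Finsupp.single i (x.sum fun j c => c * G.a i j))
    (by
      intro x
      dsimp only
      have hsub : ∀ y z : I →₀ ℤ,
          ((y - z).sum fun j c => c * G.a i j)
            = (y.sum fun j c => c * G.a i j) - (z.sum fun j c => c * G.a i j) :=
        fun y z => Finsupp.sum_sub_index (fun a b₁ b₂ => by ring)
      have hsingle : ∀ c : ℤ,
          ((Finsupp.single i c).sum fun j c' => c' * G.a i j) = c * 2 := by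
        intro c
        rw [Finsupp.sum_single_index (by ring), G.a_diag i]
      rw [hsub, hsingle]
      have h : (x.sum fun j c => c * G.a i j) - (x.sum fun j c => c * G.a i j) * 2
          = -(x.sum fun j c => c * G.a i j) := by ring
      rw [h, Finsupp.single_neg]
      abel)

/-- The product of the simple reflections along a word, acting on the root lattice. -/
noncomputable def SGCM.qword (G : SGCM I) (l : List I) : Equiv.Perm (I →₀ ℤ) :=
  (l.map G.qrefl).prod

/-! ## Heaps of fully commutative elements -/

/-- Generating relation for the heap order on the positions of a word: position `p` is
below position `q` when `p` comes later in the word and the corresponding simple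
reflections do not commute. -/
def heapBelow (G : SGCM I) (l : List I) (p q : Fin l.length) : Prop :=
  q.1 < p.1 ∧ G.srefl (l.get p) * G.srefl (l.get q) ≠ G.srefl (l.get q) * G.srefl (l.get p)

/-- The heap order on the positions of a word. -/
def heapLE (G : SGCM I) (l : List I) : Fin l.length → Fin l.length → Prop :=
  Relation.ReflTransGen (heapBelow G l)

/-- The subword of `l` consisting of the positions in `S`, in the order of the word. -/
noncomputable def idealWord (l : List I) (S : Set (Fin l.length)) : List I :=
  ((List.finRange l.length).filter fun p => @decide (p ∈ S) (Classical.propDecidable _)).map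
    l.get

open scoped Classical in
/-- The number `m(w)` attached to a `Λ`-(co)minuscule element with reduced word `l`:
the product of `(α, α) / (α_p, α_p)` over all pairs `(p, α)` where `p` is a position of
the word, `α` is a simple root with `⟨Λ, α^∨⟩ > 0` and `(α, α) > (α_p, α_p)`, and `p`
lies above the minimal `α`-coloured element `(α, 1)` of the heap (here `q` runs over the
positions and the first condition states that `q = (α, 1)` for `α` the colour of `q`). -/
noncomputable def mNum (G : SGCM I) (Λ : I → ℝ) (l : List I) : ℝ :=
  ∏ pq : Fin l.length × Fin l.length,
    if (∀ r, l.get r = l.get pq.2 → heapLE G l pq.2 r) ∧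
        0 < Λ (l.get pq.2) ∧
        G.normSq (l.get pq.1) < G.normSq (l.get pq.2) ∧
        heapLE G l pq.2 pq.1
    then G.normSq (l.get pq.2) / G.normSq (l.get pq.1)
    else 1

/-! ## Jeu de taquin numbers for (co)minuscule elements -/

/-- A valid system of choices for computing jeu de taquin numbers of `Λ`-(co)minuscule
elements: `wrd w` is a reduced word for `w`; for `u ≤ w`, `idl w u` is the order ideal
of the heap of `w` corresponding to `u`, and `tab w u` is a standard tableau whose shape
is that ideal. -/
def ValidChoices (G : SGCM I) (Λ : I → ℝ)
    (wrd : Equiv.Perm (I → ℝ) → List I)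
    (idl : (w u : Equiv.Perm (I → ℝ)) → Set (Fin (wrd w).length))
    (tab : (w u : Equiv.Perm (I → ℝ)) → JDT.Tab (heapLE G (wrd w))) : Prop :=
  (∀ w, G.IsCoMin Λ w → G.IsReduced (wrd w) ∧ G.wordProd (wrd w) = w) ∧
  (∀ w u, G.IsCoMin Λ w → G.bruhatLE u w →
      JDT.IsIdeal (heapLE G (wrd w)) (idl w u) ∧
      G.wordProd (idealWord (wrd w) (idl w u)) = u) ∧
  (∀ w u, G.IsCoMin Λ w → G.bruhatLE u w → (tab w u).dom = idl w u)

open scoped Classical in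
/-- The jeu de taquin number `t_{u,v}^w` of three Weyl group elements, computed in the
heap of `w`: the number of standard tableaux of shape `H(w)/λ(u)` rectifying to the
chosen standard tableau of shape `λ(v)`; it is `0` unless `u ≤ w` and `v ≤ w`. -/
noncomputable def tE (G : SGCM I)
    (wrd : Equiv.Perm (I → ℝ) → List I)
    (idl : (w u : Equiv.Perm (I → ℝ)) → Set (Fin (wrd w).length))
    (tab : (w u : Equiv.Perm (I → ℝ)) → JDT.Tab (heapLE G (wrd w)))
    (u v w : Equiv.Perm (I → ℝ)) : ℕ :=
  if G.bruhatLE u w ∧ G.bruhatLE v w then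
    Set.ncard {T : JDT.Tab (heapLE G (wrd w)) |
      T.dom = Set.univ \ idl w u ∧ JDT.RectifiesTo (heapLE G (wrd w)) T (tab w v)}
  else 0

/-- The number `m_{u,v}^w = m(w) / (m(u) · m(v))`. -/
noncomputable def mQuot (G : SGCM I) (Λ : I → ℝ)
    (wrd : Equiv.Perm (I → ℝ) → List I)
    (u v w : Equiv.Perm (I → ℝ)) : ℝ :=
  mNum G Λ (wrd w) / (mNum G Λ (wrd u) * mNum G Λ (wrd v))

/-- The set `S(x)` of simple roots `α` such that `⟨x(Λ), α^∨⟩ ≥ 0`. -/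
def Sx (G : SGCM I) (Λ : I → ℝ) (x : Equiv.Perm (I → ℝ)) : Set I :=
  {α : I | 0 ≤ x Λ α}

/-- The restriction of a symmetrizable GCM to a subset of the index set. -/
def SGCM.restrict (G : SGCM I) (S : Set I) : SGCM ↥S where
  a i j := G.a i.1 j.1
  d i := G.d i.1
  a_diag i := G.a_diag i.1
  a_offdiag i j h := G.a_offdiag i.1 j.1 (fun hv => h (Subtype.ext hv))
  a_zero_iff i j h := G.a_zero_iff i.1 j.1 h
  d_pos i := G.d_pos i.1
  symm i j := G.symm i.1 j.1

end KM

/-!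
Realise the Weyl group as the Coxeter group attached to the Cartan matrix, acting faithfully on
the coroot lattice. Positivity of roots (if `ℓ(w s_i) > ℓ(w)` then `w α_i^∨ ≥ 0`) is proved by
Humphreys' induction, which reduces it to dihedral subgroups; there the image of `α_i^∨` under an
alternating word is read off from the Chebyshev formulas for powers of a product of two
reflections.

Call a word `β_1 ⋯ β_l` lowering for a weight `Λ` if `⟨s_{β_{k+1}} ⋯ s_{β_l} Λ, β_k^∨⟩ > 0` for
all `k`. Minuscule words are lowering for `Λ`; cominuscule words are lowering for the dominant
weight with coordinates `Λ_i / d_i`, which vanishes exactly where `Λ` does. If `Λ` is dominant,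
`l` is lowering and `u Λ = s_{β_1} ⋯ s_{β_l} Λ`, then `⟨u Λ, β_1^∨⟩ < 0`, so by positivity `β_1` is
a left descent of `u`, and `s_{β_1} u` satisfies the same hypothesis for the shorter word: hence
`ℓ(u) ≥ l`. Taking `u = w q` with `q ∈ W_P`, which fixes `Λ`, gives `ℓ(w q) ≥ ℓ(w)`, and the parity
of the length turns `ℓ(w s_γ) ≥ ℓ(w)` into `ℓ(w s_γ) = ℓ(w) + 1`.
-/

namespace CoxeterSystem

variable {B W : Type*} [Group W] {M : CoxeterMatrix B} (cs : CoxeterSystem M W)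

theorem length_eq_sInf (w : W) :
    cs.length w = sInf {n | ∃ ω : List B, ω.length = n ∧ cs.wordProd ω = w} := by
  obtain ⟨ω, hω, rfl⟩ := cs.exists_isReduced w
  refine le_antisymm (le_csInf ⟨_, ω, rfl, rfl⟩ ?_) (Nat.sInf_le ⟨ω, hω.eq.symm, rfl⟩)
  rintro n ⟨ω', rfl, h⟩
  exact h ▸ cs.length_wordProd_le ω'

variable {cs} in
theorem IsReduced.isChain_ne {ω : List B} (hω : cs.IsReduced ω) : ω.IsChain (· ≠ ·) := by
  rw [List.isChain_iff_getElem]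
  intro n hn heq
  have hdrop : ω.drop n = ω[n] :: ω[n + 1] :: ω.drop (n + 2) := by
    rw [List.drop_eq_getElem_cons (by omega), List.drop_eq_getElem_cons hn]
  have hshort : cs.wordProd ω = cs.wordProd (ω.take n ++ ω.drop (n + 2)) := by
    conv_lhs => rw [← List.take_append_drop n ω, hdrop, heq]
    simp only [wordProd_append, wordProd_cons, simple_mul_simple_cancel_left]
  have := cs.length_wordProd_le (ω.take n ++ ω.drop (n + 2))
  rw [← hshort, hω.eq, List.length_append, List.length_take, List.length_drop] at this
  omega

variable {cs} in
theorem IsReduced.length_mul_simple_lt {ω : List B} (hω : cs.IsReduced ω) {i : B}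
    (h : ω.getLast? = some i) :
    cs.length (cs.wordProd ω * cs.simple i) < cs.length (cs.wordProd ω) := by
  obtain ⟨ω', rfl⟩ := List.getLast?_eq_some_iff.mp h
  rw [hω.eq, wordProd_append, wordProd_singleton, simple_mul_simple_cancel_right,
    List.length_append, List.length_singleton]
  exact Nat.lt_succ_of_le (cs.length_wordProd_le ω')

theorem eq_alternatingWord_of_isChain_ne {i t : B} {ω : List B}
    (hlet : ∀ x ∈ ω, x = i ∨ x = t) (hchain : ω.IsChain (· ≠ ·)) (hlast : ω.getLast? ≠ some i) :
    ω = alternatingWord i t ω.length := by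
  induction ω using List.reverseRecOn generalizing i t with
  | nil => rfl
  | append_singleton ω a ih =>
    rw [List.isChain_append] at hchain
    obtain rfl : a = t := (hlet a (by simp)).resolve_left (by rintro rfl; simp at hlast)
    have hω : ω = alternatingWord a i ω.length :=
      ih (fun x hx => (hlet x (by simp [hx])).symm) hchain.1
        fun h => hchain.2.2 a h a (by simp) rfl
    rw [List.length_append, List.length_singleton, alternatingWord_succ, ← hω,
      List.concat_eq_append]

theorem eq_alternatingWord_of_isReduced {i t : B} {ω : List B} (hω : cs.IsReduced ω)
    (hlet : ∀ x ∈ ω, x = i ∨ x = t)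
    (hasc : cs.length (cs.wordProd ω) < cs.length (cs.wordProd ω * cs.simple i)) :
    ω = alternatingWord i t ω.length ∧ (ω.length < M i t ∨ M i t = 0) := by
  have hω' : ω = alternatingWord i t ω.length :=
    eq_alternatingWord_of_isChain_ne hlet hω.isChain_ne fun h =>
      (hω.length_mul_simple_lt h).not_gt hasc
  refine ⟨hω', ?_⟩
  by_contra! hM
  rcases hM.1.lt_or_eq with hlt | heq
  · exact cs.not_isReduced_alternatingWord i t hM.2 hlt (hω' ▸ hω)
  -- a reduced alternating word of length `M i t` may be replaced by the one ending in `i`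
  have hbraid : cs.wordProd ω = cs.wordProd (alternatingWord t i ω.length) := by
    simpa only [braidWord, M.symmetric t i, heq, ← hω'] using cs.wordProd_braidWord_eq i t
  have hred : cs.IsReduced (alternatingWord t i ω.length) := by
    rw [IsReduced, ← hbraid, hω.eq, length_alternatingWord]
  obtain ⟨m, hm⟩ := Nat.exists_eq_add_of_lt (Nat.pos_of_ne_zero hM.2)
  rw [hbraid] at hasc
  refine (hred.length_mul_simple_lt ?_).not_gt hasc
  rw [← heq, hm, alternatingWord_succ, List.concat_eq_append, List.getLast?_concat]

theorem exists_eq_mul_wordProd_pair (w : W) (i t : B) :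
    ∃ v ω, w = v * cs.wordProd ω ∧ (∀ x ∈ ω, x = i ∨ x = t) ∧
      cs.length v + ω.length = cs.length w ∧
      cs.length v < cs.length (v * cs.simple i) ∧ cs.length v < cs.length (v * cs.simple t) := by
  classical
  have hex : ∃ n, ∃ v ω, cs.length v = n ∧ w = v * cs.wordProd ω ∧
      (∀ x ∈ ω, x = i ∨ x = t) ∧ cs.length v + ω.length = cs.length w :=
    ⟨_, w, [], rfl, by simp, by simp, by simp⟩
  obtain ⟨v, ω, hv, hw, hlet, hlen⟩ := Nat.find_spec hex
  have hasc : ∀ u, u = i ∨ u = t → cs.length v < cs.length (v * cs.simple u) := by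
    intro u hu
    by_contra! hdesc
    have hu' := cs.length_mul_simple v u
    refine Nat.find_min hex (by omega : cs.length (v * cs.simple u) < Nat.find hex)
      ⟨v * cs.simple u, u :: ω, rfl, ?_, ?_, ?_⟩
    · rw [wordProd_cons, mul_assoc, simple_mul_simple_cancel_left, hw]
    · exact fun x hx => (List.mem_cons.mp hx).elim (· ▸ hu) (hlet x)
    · rw [List.length_cons]
      omega
  exact ⟨v, ω, hw, hlet, hlen, hasc i (.inl rfl), hasc t (.inr rfl)⟩

end CoxeterSystem

namespace Polynomial.Chebyshev

theorem S_eval_sub_one_nonneg_and_le {τ : ℝ} (hτ : 2 ≤ τ) (n : ℕ) :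
    0 ≤ (S ℝ (n - 1)).eval τ ∧ (S ℝ (n - 1)).eval τ ≤ (S ℝ n).eval τ := by
  induction n with
  | zero => simp [S_neg_one]
  | succ n ih =>
    push_cast
    simp only [add_sub_cancel_right, S_add_one ℝ n, eval_sub, eval_mul, eval_X]
    constructor <;> nlinarith [ih.1, ih.2]

end Polynomial.Chebyshev

namespace KM

noncomputable section

open Polynomial Polynomial.Chebyshev

open Finsupp (linearCombination)

variable {I : Type}

/-- The Coxeter exponent `m_ij` determined by `a_ij a_ji`, with `0` standing for `m_ij = ∞`. -/
def coxeterExponent (k : ℤ) : ℕ :=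
  if k = 0 then 2 else if k = 1 then 3 else if k = 2 then 4 else if k = 3 then 6 else 0

lemma coxeterExponent_of_four_le {k : ℤ} (hk : 4 ≤ k) : coxeterExponent k = 0 := by
  unfold coxeterExponent
  split_ifs <;> omega

/-- With `k = a_it a_ti`, these Chebyshev values are the coefficients of `(s_i s_t)^n α_i^∨` and
`s_t (s_i s_t)^n α_i^∨` on `α_i^∨, α_t^∨` (up to the factor `-a_it ≥ 0`), for words of length `r`. -/
lemma S_eval_nonneg_of_lt_coxeterExponent {k : ℤ} (hk : 0 ≤ k) {r : ℕ}
    (hr : r < coxeterExponent k ∨ coxeterExponent k = 0) :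
    (∀ j : ℕ, 2 * j ≤ r + 1 → 0 ≤ (S ℝ (j - 1)).eval ((k : ℝ) - 2)) ∧
      ∀ n : ℕ, 2 * n ≤ r → 0 ≤ (S ℝ n).eval ((k : ℝ) - 2) + (S ℝ (n - 1)).eval ((k : ℝ) - 2) := by
  by_cases hk4 : 4 ≤ k
  · have hτ : (2 : ℝ) ≤ k - 2 := by
      have : (4 : ℝ) ≤ k := by exact_mod_cast hk4
      linarith
    refine ⟨fun j _ => (S_eval_sub_one_nonneg_and_le hτ j).1, fun n _ => ?_⟩
    obtain ⟨h0, h1⟩ := S_eval_sub_one_nonneg_and_le hτ n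
    linarith
  have hr' : r < coxeterExponent k := hr.resolve_right (by interval_cases k <;> decide)
  have hr6 : r < 6 := by interval_cases k <;> simp [coxeterExponent] at hr' <;> omega
  constructor
  · intro j hj
    have : j ≤ 3 := by omega
    interval_cases k <;> interval_cases j <;> simp [coxeterExponent] at hr' <;>
      norm_num [S_neg_one, S_two] <;> omega
  · intro n hn
    have : n ≤ 2 := by omega
    interval_cases k <;> interval_cases n <;> simp [coxeterExponent] at hr' <;>
      norm_num [S_neg_one, S_two] <;> omega

lemma linearCombination_nonneg {f : I → ℝ} {x : I →₀ ℝ} (hf : ∀ j, 0 ≤ f j)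
    (hx : ∀ j, 0 ≤ x j) : 0 ≤ linearCombination ℝ f x := by
  rw [Finsupp.linearCombination_apply]
  exact Finset.sum_nonneg fun j _ => smul_nonneg (hx j) (hf j)

lemma linearCombination_piSingle [DecidableEq I] (j : I) (x : I →₀ ℝ) :
    linearCombination ℝ (Pi.single j 1) x = x j := by
  induction x using Finsupp.induction_linear with
  | zero => simp
  | add x y hx hy => simp only [map_add, Finsupp.add_apply, hx, hy]
  | single k c => by_cases h : k = j <;> simp [h]

namespace SGCM

/-! ### The coroot representation of the Weyl group -/

variable (G : SGCM I)

/-- A vector `x : I →₀ ℝ` of the coroot lattice stands for `Σ x_j α_j^∨`, so that a weight `μ`,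
recorded by its coordinates `μ j = ⟨μ, α_j^∨⟩`, pairs with it as `linearCombination ℝ μ x`. -/
def simpleCoroot (i : I) : I →₀ ℝ := Finsupp.single i 1

def simpleRoot (i : I) : Module.Dual ℝ (I →₀ ℝ) :=
  linearCombination ℝ fun j => (G.a j i : ℝ)

@[simp]
lemma simpleRoot_simpleCoroot (i j : I) : G.simpleRoot i (simpleCoroot j) = G.a j i := by
  simp [simpleRoot, simpleCoroot]

lemma simpleRoot_simpleCoroot_self (i : I) : G.simpleRoot i (simpleCoroot i) = 2 := by
  simp [G.a_diag]

def corefl (i : I) : (I →₀ ℝ) ≃ₗ[ℝ] (I →₀ ℝ) :=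
  Module.reflection (G.simpleRoot_simpleCoroot_self i)

lemma linearCombination_simpleCoroot (μ : I → ℝ) (j : I) :
    linearCombination ℝ μ (simpleCoroot j) = μ j := by
  simp [simpleCoroot]

lemma corefl_apply (i : I) (x : I →₀ ℝ) :
    G.corefl i x = x - G.simpleRoot i x • simpleCoroot i :=
  Module.reflection_apply _ _

lemma corefl_simpleCoroot_self (i : I) : G.corefl i (simpleCoroot i) = -simpleCoroot i :=
  Module.reflection_apply_self _

lemma corefl_corefl (i : I) (x : I →₀ ℝ) : G.corefl i (G.corefl i x) = x :=
  Module.involutive_reflection _ x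

open scoped Classical in
def coxeterMatrix : CoxeterMatrix I where
  M := Matrix.of fun i j => if i = j then 1 else coxeterExponent (G.a i j * G.a j i)
  isSymm := by
    ext i j
    by_cases h : i = j
    · simp [h]
    · simp [h, Ne.symm h, mul_comm]
  diagonal i := by simp
  off_diagonal i j h := by
    simp only [Matrix.of_apply, if_neg h, coxeterExponent]
    split_ifs <;> norm_num

lemma coxeterMatrix_of_ne {i j : I} (h : i ≠ j) :
    G.coxeterMatrix i j = coxeterExponent (G.a i j * G.a j i) := by
  classical
  simp [coxeterMatrix, h]

lemma cartan_mul_nonneg {i j : I} (h : i ≠ j) : 0 ≤ G.a i j * G.a j i :=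
  mul_nonneg_of_nonpos_of_nonpos (G.a_offdiag i j h) (G.a_offdiag j i (Ne.symm h))

lemma corefl_mul_corefl_pow_coxeterMatrix (i j : I) :
    (G.corefl i * G.corefl j) ^ G.coxeterMatrix i j = 1 := by
  by_cases hij : i = j
  · subst hij
    simpa [corefl] using mul_inv_cancel (G.corefl i)
  have ht : ((G.a i j * G.a j i : ℤ) : ℝ) - 2 =
      G.simpleRoot i (simpleCoroot j) * G.simpleRoot j (simpleCoroot i) - 2 := by
    push_cast [simpleRoot_simpleCoroot]
    ring
  have hk0 := G.cartan_mul_nonneg hij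
  rw [G.coxeterMatrix_of_ne hij]
  generalize hk : G.a i j * G.a j i = k at ht hk0
  by_cases hk4 : 4 ≤ k
  · rw [coxeterExponent_of_four_le hk4, pow_zero]
  ext1 z
  rw [corefl, corefl, Module.reflection_mul_reflection_pow_apply _ _ _ _ _ ht]
  interval_cases k
  · obtain ⟨hij0, hji0⟩ : G.a i j = 0 ∧ G.a j i = 0 := by
      rcases mul_eq_zero.mp hk with h | h
      · exact ⟨h, G.a_zero_iff i j h⟩
      · exact ⟨G.a_zero_iff j i h, h⟩
    simp [coxeterExponent, hij0, hji0, S_neg_one]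
    module
  · norm_num [coxeterExponent, S_neg_one]
  · norm_num [coxeterExponent]
  · norm_num [coxeterExponent, S_two]

abbrev WeylGroup : Type := G.coxeterMatrix.Group

def coxeterSystem : CoxeterSystem G.coxeterMatrix G.WeylGroup :=
  G.coxeterMatrix.toCoxeterSystem

def corootRep : G.WeylGroup →* ((I →₀ ℝ) ≃ₗ[ℝ] (I →₀ ℝ)) :=
  G.coxeterSystem.lift ⟨G.corefl, G.corefl_mul_corefl_pow_coxeterMatrix⟩

@[simp]
lemma corootRep_simple (i : I) : G.corootRep (G.coxeterSystem.simple i) = G.corefl i :=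
  G.coxeterSystem.lift_apply_simple _ i

lemma corootRep_alternatingWord {i t : I} (hit : i ≠ t) (r : ℕ)
    (hr : r < G.coxeterMatrix i t ∨ G.coxeterMatrix i t = 0) :
    ∃ a b : ℝ, 0 ≤ a ∧ 0 ≤ b ∧
      G.corootRep (G.coxeterSystem.wordProd (CoxeterSystem.alternatingWord i t r))
        (simpleCoroot i) = a • simpleCoroot i + b • simpleCoroot t := by
  have hc : 0 ≤ -(G.a i t : ℝ) := by exact_mod_cast neg_nonneg.mpr (G.a_offdiag i t hit)
  have hτ : ((G.a i t * G.a t i : ℤ) : ℝ) - 2 =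
      G.simpleRoot i (simpleCoroot t) * G.simpleRoot t (simpleCoroot i) - 2 := by
    push_cast [simpleRoot_simpleCoroot]
    ring
  obtain ⟨hS, hS_add⟩ := S_eval_nonneg_of_lt_coxeterExponent (G.cartan_mul_nonneg hit)
    (r := r) (by rwa [← G.coxeterMatrix_of_ne hit])
  rw [CoxeterSystem.prod_alternatingWord_eq_mul_pow, map_mul, map_pow, map_mul]
  simp only [apply_ite G.corootRep, map_one, corootRep_simple]
  obtain ⟨n, rfl | rfl⟩ := Nat.even_or_odd' r
  · rw [if_pos (even_two_mul n), one_mul, corefl, corefl,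
      Module.reflection_mul_reflection_pow_apply_self _ _ _ _ hτ]
    simp only [Nat.mul_div_cancel_left n two_pos, simpleRoot_simpleCoroot]
    exact ⟨_, _, hS_add n le_rfl, mul_nonneg (hS n (by omega)) hc, rfl⟩
  · rw [if_neg (Nat.not_even_two_mul_add_one n), corefl, corefl,
      Module.reflection_mul_reflection_mul_reflection_pow_apply_self _ _ _ _ hτ]
    simp only [Nat.mul_add_div two_pos, Nat.div_eq_of_lt one_lt_two, add_zero,
      simpleRoot_simpleCoroot]
    refine ⟨_, _, hS_add n (by omega), mul_nonneg ?_ hc, rfl⟩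
    simpa using hS (n + 1) (by omega)

variable {G}

lemma corootRep_wordProd_of_pair {i t : I} (hit : i ≠ t) {ω : List I}
    (hω : G.coxeterSystem.IsReduced ω) (hlet : ∀ x ∈ ω, x = i ∨ x = t)
    (hasc : G.coxeterSystem.length (G.coxeterSystem.wordProd ω) <
      G.coxeterSystem.length (G.coxeterSystem.wordProd ω * G.coxeterSystem.simple i)) :
    ∃ a b : ℝ, 0 ≤ a ∧ 0 ≤ b ∧
      G.corootRep (G.coxeterSystem.wordProd ω) (simpleCoroot i) =
        a • simpleCoroot i + b • simpleCoroot t := by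
  obtain ⟨hω', hr⟩ := G.coxeterSystem.eq_alternatingWord_of_isReduced hω hlet hasc
  rw [hω']
  exact G.corootRep_alternatingWord hit _ hr

theorem corootRep_simpleCoroot_nonneg (w : G.WeylGroup) (i : I)
    (h : G.coxeterSystem.length w < G.coxeterSystem.length (w * G.coxeterSystem.simple i))
    (j : I) : 0 ≤ G.corootRep w (simpleCoroot i) j := by
  set cs := G.coxeterSystem
  induction hn : cs.length w using Nat.strong_induction_on generalizing w i j with
  | _ n ih =>
  by_cases hw1 : w = 1
  · subst hw1
    exact Finsupp.single_nonneg.2 zero_le_one j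
  obtain ⟨t, ht⟩ := cs.exists_rightDescent_of_ne_one hw1
  have hti : t ≠ i := by rintro rfl; exact lt_asymm h ht
  obtain ⟨v, ω, rfl, hlet, hlen, hvi, hvt⟩ := cs.exists_eq_mul_wordProd_pair w i t
  have hω : ω ≠ [] := by rintro rfl; simp [CoxeterSystem.IsRightDescent] at ht; omega
  have hred : cs.IsReduced ω := by
    have := cs.length_mul_le v (cs.wordProd ω)
    have := cs.length_wordProd_le ω
    unfold CoxeterSystem.IsReduced
    omega
  have hasc : cs.length (cs.wordProd ω) < cs.length (cs.wordProd ω * cs.simple i) := by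
    have := cs.length_mul_le v (cs.wordProd ω * cs.simple i)
    have := cs.length_mul_simple (cs.wordProd ω) i
    have := hred.eq
    rw [mul_assoc] at h
    omega
  have hv : cs.length v < n := by
    have := List.length_pos_of_ne_nil hω
    omega
  obtain ⟨a, b, ha, hb, hab⟩ := corootRep_wordProd_of_pair (Ne.symm hti) hred hlet hasc
  rw [map_mul, LinearEquiv.mul_apply, hab, map_add, map_smul, map_smul]
  simp only [Finsupp.add_apply, Finsupp.smul_apply, smul_eq_mul]
  exact add_nonneg (mul_nonneg ha (ih _ hv v i j hvi rfl))
    (mul_nonneg hb (ih _ hv v t j hvt rfl))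

lemma corootRep_injective : Function.Injective G.corootRep := by
  refine (injective_iff_map_eq_one _).2 fun w hw => ?_
  by_contra hw1
  obtain ⟨i, hi⟩ := G.coxeterSystem.exists_rightDescent_of_ne_one hw1
  have hasc : G.coxeterSystem.length (w * G.coxeterSystem.simple i) <
      G.coxeterSystem.length (w * G.coxeterSystem.simple i * G.coxeterSystem.simple i) := by
    rwa [CoxeterSystem.simple_mul_simple_cancel_right]
  have := corootRep_simpleCoroot_nonneg _ i hasc i
  rw [map_mul, hw, one_mul, corootRep_simple, corefl_simpleCoroot_self] at this
  norm_num [simpleCoroot] at this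

/-! ### The weight action of words -/

variable (G)

lemma srefl_apply (i : I) (μ : I → ℝ) (j : I) : G.srefl i μ j = μ j - μ i * G.a j i := rfl

lemma srefl_inv (i : I) : (G.srefl i)⁻¹ = G.srefl i :=
  Function.Involutive.toPerm_symm _

lemma wordProd_cons (i : I) (l : List I) : G.wordProd (i :: l) = G.srefl i * G.wordProd l := by
  simp [SGCM.wordProd]

lemma wordProd_singleton (i : I) : G.wordProd [i] = G.srefl i := by
  simp [SGCM.wordProd]

lemma wordProd_append (l l' : List I) : G.wordProd (l ++ l') = G.wordProd l * G.wordProd l' := by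
  simp [SGCM.wordProd]

lemma wordProd_reverse (l : List I) : G.wordProd l.reverse = (G.wordProd l)⁻¹ := by
  induction l with
  | nil => rfl
  | cons i l ih =>
    rw [List.reverse_cons, wordProd_append, ih, wordProd_singleton, wordProd_cons, mul_inv_rev,
      srefl_inv]

lemma wordProd_apply_eq_self {μ : I → ℝ} {l : List I} (hl : ∀ j ∈ l, μ j = 0) :
    G.wordProd l μ = μ := by
  induction l with
  | nil => rfl
  | cons i l ih =>
    rw [wordProd_cons, Equiv.Perm.mul_apply, ih fun j hj => hl j (List.mem_cons_of_mem i hj)]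
    ext j
    simp [srefl_apply, hl i List.mem_cons_self]

lemma exists_wordProd_eq_of_mem_closure {P : I → Prop} {q : Equiv.Perm (I → ℝ)}
    (hq : q ∈ Subgroup.closure {p | ∃ i, P i ∧ p = G.srefl i}) :
    ∃ z : List I, (∀ j ∈ z, P j) ∧ G.wordProd z = q := by
  induction hq using Subgroup.closure_induction with
  | mem x hx =>
    obtain ⟨i, hi, rfl⟩ := hx
    exact ⟨[i], by simpa using hi, G.wordProd_singleton i⟩
  | one => exact ⟨[], by simp, rfl⟩
  | mul x y _ _ hx hy =>
    obtain ⟨z, hz, rfl⟩ := hx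
    obtain ⟨z', hz', rfl⟩ := hy
    exact ⟨z ++ z', fun j hj => (List.mem_append.1 hj).elim (hz j) (hz' j),
      G.wordProd_append z z'⟩
  | inv x _ hx =>
    obtain ⟨z, hz, rfl⟩ := hx
    exact ⟨z.reverse, by simpa using hz, G.wordProd_reverse z⟩

lemma linearCombination_srefl (i : I) (μ : I → ℝ) (x : I →₀ ℝ) :
    linearCombination ℝ (G.srefl i μ) x = linearCombination ℝ μ (G.corefl i x) := by
  induction x using Finsupp.induction_linear with
  | zero => simp
  | add x y hx hy => simp only [map_add, hx, hy]
  | single j c =>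
    rw [corefl_apply, map_sub, map_smul, simpleRoot, simpleCoroot]
    simp only [Finsupp.linearCombination_single, srefl_apply, smul_eq_mul]
    ring

lemma linearCombination_wordProd (l : List I) (μ : I → ℝ) (x : I →₀ ℝ) :
    linearCombination ℝ (G.wordProd l μ) x =
      linearCombination ℝ μ (G.corootRep (G.coxeterSystem.wordProd l)⁻¹ x) := by
  induction l generalizing x with
  | nil => simp [SGCM.wordProd]
  | cons i l ih =>
    rw [wordProd_cons, Equiv.Perm.mul_apply, linearCombination_srefl, ih,
      CoxeterSystem.wordProd_cons, mul_inv_rev, CoxeterSystem.inv_simple, map_mul,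
      LinearEquiv.mul_apply, corootRep_simple]

lemma wordProd_eq_wordProd_iff (l l' : List I) :
    G.wordProd l = G.wordProd l' ↔ G.coxeterSystem.wordProd l = G.coxeterSystem.wordProd l' := by
  classical
  refine ⟨fun h => inv_injective <| G.corootRep_injective <| LinearEquiv.ext fun x =>
    Finsupp.ext fun j => ?_, fun h => ?_⟩
  · have hj := G.linearCombination_wordProd l (Pi.single j 1) x
    rw [h, linearCombination_wordProd] at hj
    simpa only [linearCombination_piSingle] using hj.symm
  · ext μ j
    have hj := G.linearCombination_wordProd l μ (simpleCoroot j)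
    rwa [h, ← linearCombination_wordProd, linearCombination_simpleCoroot,
      linearCombination_simpleCoroot] at hj

lemma length_wordProd (l : List I) :
    G.length (G.wordProd l) = G.coxeterSystem.length (G.coxeterSystem.wordProd l) := by
  simp only [SGCM.length, wordProd_eq_wordProd_iff, G.coxeterSystem.length_eq_sInf]

lemma length_wordProd_mul_srefl (l : List I) (i : I) :
    G.length (G.wordProd l * G.srefl i) = G.length (G.wordProd l) + 1 ∨
      G.length (G.wordProd l * G.srefl i) + 1 = G.length (G.wordProd l) := by
  rw [← wordProd_singleton, ← wordProd_append, length_wordProd, length_wordProd,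
    CoxeterSystem.wordProd_append, CoxeterSystem.wordProd_singleton]
  exact G.coxeterSystem.length_mul_simple _ i

lemma dual_srefl (i : I) (ν : I → ℝ) : G.dual.srefl i (G.d * ν) = G.d * G.srefl i ν := by
  ext j
  simp only [srefl_apply, Pi.mul_apply, SGCM.dual]
  linear_combination -ν i * G.symm i j

lemma dual_wordProd (l : List I) (ν : I → ℝ) :
    G.dual.wordProd l (G.d * ν) = G.d * G.wordProd l ν := by
  induction l with
  | nil => rfl
  | cons i l ih => rw [wordProd_cons, wordProd_cons, Equiv.Perm.mul_apply, ih, dual_srefl]; rfl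

/-! ### Lowering words -/

def LoweringWord (Λ : I → ℝ) : List I → Prop
  | [] => True
  | j :: l => LoweringWord Λ l ∧ 0 < G.wordProd l Λ j

variable {G}

lemma MinusculeWord.loweringWord {Λ : I → ℝ} {l : List I} (h : G.MinusculeWord Λ l) :
    G.LoweringWord Λ l := by
  induction l with
  | nil => trivial
  | cons j l ih => exact ⟨ih h.1, h.2.symm ▸ one_pos⟩

lemma loweringWord_of_dual_minusculeWord {ν : I → ℝ} {l : List I}
    (h : G.dual.MinusculeWord (G.d * ν) l) : G.LoweringWord ν l := by
  induction l with
  | nil => trivial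
  | cons j l ih =>
    have h1 : G.d j * G.wordProd l ν j = 1 := by simpa [G.dual_wordProd] using h.2
    exact ⟨ih h.1, pos_of_mul_pos_right (h1 ▸ one_pos) (G.d_pos j).le⟩

lemma IsCoMin.exists_loweringWord {Λ : I → ℝ} {w : Equiv.Perm (I → ℝ)} (hw : G.IsCoMin Λ w)
    (hΛ : ∀ i, 0 ≤ Λ i) :
    ∃ l ν, G.IsReduced l ∧ G.wordProd l = w ∧ (∀ i, 0 ≤ ν i) ∧ (∀ i, Λ i = 0 → ν i = 0) ∧
      G.LoweringWord ν l := by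
  rcases hw with ⟨l, hred, rfl, hmin⟩ | ⟨l, hred, rfl, hcomin⟩
  · exact ⟨l, Λ, hred, rfl, hΛ, fun _ => id, hmin.loweringWord⟩
  · refine ⟨l, Λ / G.d, hred, rfl, fun i => div_nonneg (hΛ i) (G.d_pos i).le,
      fun i hi => by simp [hi], loweringWord_of_dual_minusculeWord ?_⟩
    rwa [show G.d * (Λ / G.d) = Λ from funext fun i => mul_div_cancel₀ (Λ i) (G.d_pos i).ne']

theorem LoweringWord.length_le {Λ : I → ℝ} (hΛ : ∀ i, 0 ≤ Λ i) {l : List I}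
    (hl : G.LoweringWord Λ l) (v : G.WeylGroup)
    (hv : ∀ x, linearCombination ℝ Λ (G.corootRep v x) = linearCombination ℝ (G.wordProd l Λ) x) :
    l.length ≤ G.coxeterSystem.length v := by
  induction l generalizing v with
  | nil => simp
  | cons β l ih =>
    obtain ⟨hl, hβ⟩ := hl
    have hsrefl : ∀ x, linearCombination ℝ (G.wordProd (β :: l) Λ) x =
        linearCombination ℝ (G.wordProd l Λ) (G.corefl β x) := fun x => by
      rw [wordProd_cons, Equiv.Perm.mul_apply, linearCombination_srefl]
    have hneg : linearCombination ℝ Λ (G.corootRep v (simpleCoroot β)) < 0 := by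
      rw [hv, hsrefl, corefl_simpleCoroot_self, map_neg, linearCombination_simpleCoroot]
      linarith
    have hdesc : G.coxeterSystem.length (v * G.coxeterSystem.simple β) + 1 =
        G.coxeterSystem.length v := by
      refine (G.coxeterSystem.length_mul_simple v β).resolve_left fun hasc => hneg.not_ge ?_
      exact linearCombination_nonneg hΛ (corootRep_simpleCoroot_nonneg v β (by omega))
    have := ih hl (v * G.coxeterSystem.simple β) fun x => by
      rw [map_mul, LinearEquiv.mul_apply, corootRep_simple, hv, hsrefl, corefl_corefl]
    rw [List.length_cons]
    omega

theorem LoweringWord.length_le_length_wordProd {Λ : I → ℝ} (hΛ : ∀ i, 0 ≤ Λ i) {l : List I}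
    (hl : G.LoweringWord Λ l) {m : List I} (hm : G.wordProd m Λ = G.wordProd l Λ) :
    l.length ≤ G.length (G.wordProd m) := by
  rw [length_wordProd, ← CoxeterSystem.length_inv]
  refine hl.length_le hΛ _ fun x => ?_
  rw [← linearCombination_wordProd, hm]

end SGCM

end

end KM

/-- Let `Λ` be a dominant weight and `W_P` the subgroup generated by the
simple reflections `s_γ` with `⟨Λ, γ^∨⟩ = 0`. If `w` is `Λ`-minuscule or `Λ`-cominuscule,
then `w` is a minimal length representative of its coset `w W_P`; equivalently
`ℓ(w s_γ) = ℓ(w) + 1` for every simple root `γ` with `⟨Λ, γ^∨⟩ = 0`. -/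
theorem statement2 {I : Type} (G : KM.SGCM I) (Λ : I → ℝ) (hdom : ∀ i, 0 ≤ Λ i)
    (w : Equiv.Perm (I → ℝ)) (hw : G.IsCoMin Λ w) :
    (∀ q ∈ Subgroup.closure {p : Equiv.Perm (I → ℝ) | ∃ i, Λ i = 0 ∧ p = G.srefl i},
        G.length w ≤ G.length (w * q)) ∧
    (∀ i : I, Λ i = 0 → G.length (w * G.srefl i) = G.length w + 1) := by
  obtain ⟨l, ν, hred, rfl, hν, hνΛ, hlow⟩ := hw.exists_loweringWord hdom
  have hmin : ∀ z : List I, (∀ j ∈ z, Λ j = 0) →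
      G.length (G.wordProd l) ≤ G.length (G.wordProd l * G.wordProd z) := fun z hz => by
    rw [hred, ← G.wordProd_append]
    refine hlow.length_le_length_wordProd hν ?_
    rw [G.wordProd_append, Equiv.Perm.mul_apply,
      G.wordProd_apply_eq_self fun j hj => hνΛ j (hz j hj)]
  refine ⟨fun q hq => ?_, fun i hi => ?_⟩
  · obtain ⟨z, hz, rfl⟩ := G.exists_wordProd_eq_of_mem_closure hq
    exact hmin z hz
  · have hge := hmin [i] (by simpa using hi)
    rw [G.wordProd_singleton] at hge
    have := G.length_wordProd_mul_srefl l i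
    omega
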